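/- For all n ≥ 4, every (n,4,9)-multigraph with all edge multiplicities in {0,1,2} has product of edge multiplicities at most 2^(ex(n,{C₃,C₄})), where ex(n,{C₃,C₄}) is the maximum number of edges in an n-vertex graph containing no triangle and no 4-cycle. -/

import Mathlib

open Finset

def pairs (n : ℕ) (X : Finset (Fin n)) : Finset (Fin n × Fin n) :=
  (X ×ˢ X).filter (fun p => p.1 < p.2)

def mgS (n : ℕ) (w : Fin n → Fin n → ℕ) (X : Finset (Fin n)) : ℕ :=
  ∑ p ∈ pairs n X, w p.1 p.2

def mgP (n : ℕ) (w : Fin n → Fin n → ℕ) (X : Finset (Fin n)) : ℕ :=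
  ∏ p ∈ pairs n X, w p.1 p.2

def IsNSQ (n s q : ℕ) (w : Fin n → Fin n → ℕ) : Prop :=
  ∀ X : Finset (Fin n), X.card = s → mgS n w X ≤ q

def C3C4Free {n : ℕ} (G : SimpleGraph (Fin n)) : Prop :=
  (∀ x y z : Fin n, G.Adj x y → G.Adj y z → G.Adj x z → False) ∧
  (∀ a b c d : Fin n, a ≠ c → b ≠ d →
    G.Adj a b → G.Adj b c → G.Adj c d → G.Adj d a → False)

noncomputable def exC34 (n : ℕ) : ℕ :=
  sSup {m | ∃ G : SimpleGraph (Fin n), C3C4Free G ∧ m = Nat.card G.edgeSet}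

/-!
If some pair has multiplicity `0` the product vanishes, so assume all multiplicities lie in
`{1, 2}`; the product is then `2 ^ e(H)`, where `H` is the graph of the pairs of multiplicity `2`.
Since any other pair contributes at least `1`, a 4-set carrying a 4-cycle of `H`, or a triangle
of `H` together with a further edge at one of its vertices, would have total multiplicity at least
`10`. So `H` has no 4-cycle and its triangles are whole components. If some vertex `v₀` lies in no
triangle, replacing the triangles by edges from `v₀` to all their vertices keeps the number of
edges and leaves no triangle or 4-cycle. Otherwise `H` is a disjoint union of at least two
triangles, and has as many edges as the cycle through its (at least five) vertices.
-/

section Multigraph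

variable {n : ℕ} {w : Fin n → Fin n → ℕ}

theorem mgS_eq_sum_sum (X : Finset (Fin n)) :
    mgS n w X = ∑ x ∈ X, ∑ y ∈ X, if x < y then w x y else 0 := by
  rw [mgS, pairs, sum_filter, sum_product]

theorem mgS_insert (hsym : ∀ i j, w i j = w j i) {a : Fin n} {X : Finset (Fin n)}
    (ha : a ∉ X) : mgS n w (insert a X) = mgS n w X + ∑ x ∈ X, w a x := by
  have hpair : ∀ x ∈ X, ((if a < x then w a x else 0) + if x < a then w x a else 0) = w a x := by
    intro x hx
    rcases lt_or_gt_of_ne (ne_of_mem_of_not_mem hx ha).symm with h | h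
    · simp [h, h.not_gt]
    · simp [h, h.not_gt, hsym x a]
  simp only [mgS_eq_sum_sum, sum_insert ha, lt_irrefl, if_false, zero_add, sum_add_distrib]
  rw [← sum_congr rfl hpair, sum_add_distrib]
  ring

theorem mgS_singleton (a : Fin n) : mgS n w {a} = 0 := by
  simp [mgS_eq_sum_sum]

theorem IsNSQ.sum_le_of_four {q : ℕ} (h : IsNSQ n 4 q w) (hsym : ∀ i j, w i j = w j i)
    {a b c d : Fin n} (hab : a ≠ b) (hac : a ≠ c) (had : a ≠ d) (hbc : b ≠ c) (hbd : b ≠ d)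
    (hcd : c ≠ d) : w a b + w a c + w a d + w b c + w b d + w c d ≤ q := by
  have hc : c ∉ ({d} : Finset (Fin n)) := by simpa
  have hb : b ∉ ({c, d} : Finset (Fin n)) := by simp [hbc, hbd]
  have ha : a ∉ ({b, c, d} : Finset (Fin n)) := by simp [hab, hac, had]
  have hS := h {a, b, c, d} (by rw [card_insert_of_notMem ha, card_insert_of_notMem hb,
    card_insert_of_notMem hc, card_singleton])
  rw [mgS_insert hsym ha, mgS_insert hsym hb, mgS_insert hsym hc, mgS_singleton] at hS
  simp only [sum_insert hb, sum_insert hc, sum_singleton] at hS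
  omega

theorem mgP_univ_eq_zero (hsym : ∀ i j, w i j = w j i) {i j : Fin n} (hij : i ≠ j)
    (h : w i j = 0) : mgP n w univ = 0 := by
  rcases lt_or_gt_of_ne hij with hlt | hlt
  · exact prod_eq_zero (i := (i, j)) (by simp [pairs, hlt]) h
  · exact prod_eq_zero (i := (j, i)) (by simp [pairs, hlt]) (by rwa [hsym])

end Multigraph

namespace SimpleGraph

variable {V : Type*} (H : SimpleGraph V)

def InTriangle (v : V) : Prop :=
  ∃ y z, H.Adj v y ∧ H.Adj v z ∧ H.Adj y z

def TrianglesAreComponents : Prop :=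
  ∀ ⦃x y z u : V⦄, H.Adj x y → H.Adj x z → H.Adj y z → H.Adj x u → u = y ∨ u = z

/-- With `NoFourCycle`, the two clauses of `C3C4Free`, for graphs on an arbitrary vertex type. -/
def NoTriangle : Prop :=
  ∀ x y z : V, H.Adj x y → H.Adj y z → H.Adj x z → False

def NoFourCycle : Prop :=
  ∀ a b c d : V, a ≠ c → b ≠ d → H.Adj a b → H.Adj b c → H.Adj c d → H.Adj d a → False

def triangleStar (v₀ : V) : SimpleGraph V :=
  fromRel fun x y => H.Adj x y ∧ ¬H.InTriangle x ∧ ¬H.InTriangle y ∨ x = v₀ ∧ H.InTriangle y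

theorem two_mul_card_edgeSet [Fintype V] [DecidableRel H.Adj] :
    2 * Nat.card H.edgeSet = ∑ v, H.degree v := by
  rw [sum_degrees_eq_twice_card_edges, edgeFinset_card, Nat.card_eq_fintype_card]

variable {H}

theorem triangleStar_adj_of_inTriangle {v₀ x y : V} (hv₀ : ¬H.InTriangle v₀)
    (hx : H.InTriangle x) : (H.triangleStar v₀).Adj x y ↔ y = v₀ := by
  have hxv₀ : x ≠ v₀ := by rintro rfl; exact hv₀ hx
  simp only [triangleStar, fromRel_adj]
  constructor
  · rintro ⟨-, (⟨-, h, -⟩ | ⟨rfl, -⟩) | (⟨-, -, h⟩ | ⟨rfl, -⟩)⟩ <;> trivial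
  · rintro rfl
    exact ⟨hxv₀, Or.inr (Or.inr ⟨rfl, hx⟩)⟩

theorem triangleStar_adj_eq_of_inTriangle {v₀ x y z : V} (hv₀ : ¬H.InTriangle v₀)
    (hx : H.InTriangle x) (hxy : (H.triangleStar v₀).Adj x y)
    (hxz : (H.triangleStar v₀).Adj x z) : y = z := by
  rw [triangleStar_adj_of_inTriangle hv₀ hx] at hxy hxz
  rw [hxy, hxz]

namespace TrianglesAreComponents

variable (hT : H.TrianglesAreComponents)
include hT

theorem inTriangle_of_adj {x y : V} (hx : H.InTriangle x) (hxy : H.Adj x y) :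
    H.InTriangle y := by
  obtain ⟨p, q, hxp, hxq, hpq⟩ := hx
  rcases hT hxp hxq hpq hxy with rfl | rfl
  · exact ⟨x, q, hxp.symm, hpq, hxq⟩
  · exact ⟨x, p, hxq.symm, hpq.symm, hxp⟩

theorem degree_eq_two [DecidableEq V] {v : V} [Fintype (H.neighborSet v)]
    (hv : H.InTriangle v) : H.degree v = 2 := by
  obtain ⟨y, z, hvy, hvz, hyz⟩ := hv
  have hnbr : H.neighborFinset v = {y, z} := by
    ext u
    simp only [mem_neighborFinset, mem_insert, mem_singleton]
    refine ⟨hT hvy hvz hyz, ?_⟩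
    rintro (rfl | rfl) <;> assumption
  rw [degree, hnbr, card_pair hyz.ne]

theorem card_edgeSet_of_forall_inTriangle [Fintype V] (hall : ∀ v, H.InTriangle v) :
    Nat.card H.edgeSet = Fintype.card V := by
  classical
  have h := two_mul_card_edgeSet H
  rw [sum_congr rfl fun v _ => hT.degree_eq_two (hall v), sum_const, card_univ,
    smul_eq_mul] at h
  omega

/-- A triangle is a whole component, so a vertex outside it lies in another, disjoint triangle. -/
theorem five_le_card [Fintype V] [DecidableEq V] (hall : ∀ v, H.InTriangle v)
    (hV : 3 < Fintype.card V) : 5 ≤ Fintype.card V := by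
  obtain ⟨v⟩ : Nonempty V := Fintype.card_pos_iff.mp (by omega)
  obtain ⟨y, z, hvy, hvz, hyz⟩ := hall v
  set S : Finset V := {v, y, z}
  have hS : #S = 3 := card_eq_three.mpr ⟨v, y, z, hvy.ne, hvz.ne, hyz.ne, rfl⟩
  have hclosed : ∀ x ∈ S, ∀ u, H.Adj x u → u ∈ S := by
    simp only [S, mem_insert, mem_singleton]
    rintro x (rfl | rfl | rfl) u hu
    · rcases hT hvy hvz hyz hu with rfl | rfl <;> simp
    · rcases hT hvy.symm hyz hvz hu with rfl | rfl <;> simp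
    · rcases hT hvz.symm hyz.symm hvy hu with rfl | rfl <;> simp
  obtain ⟨u, -, huS⟩ := exists_mem_notMem_of_card_lt_card (s := S) (t := univ)
    (by rw [card_univ]; omega)
  obtain ⟨p, -, hup, -, -⟩ := hall u
  have hpS : p ∉ insert u S := by
    rw [mem_insert, not_or]
    exact ⟨hup.ne', fun hp => huS (hclosed p hp u hup.symm)⟩
  calc 5 = #(insert p (insert u S)) := by
        rw [card_insert_of_notMem hpS, card_insert_of_notMem huS, hS]
    _ ≤ Fintype.card V := card_le_univ _

variable {v₀ : V}

theorem triangleStar_adj_of_not_inTriangle {x y : V} (hx : ¬H.InTriangle x) :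
    (H.triangleStar v₀).Adj x y ↔ H.Adj x y ∨ x = v₀ ∧ H.InTriangle y := by
  have hy : H.Adj x y → ¬H.InTriangle y := fun hxy hy => hx (hT.inTriangle_of_adj hy hxy.symm)
  simp only [triangleStar, fromRel_adj]
  constructor
  · rintro ⟨-, (⟨h, -⟩ | h) | (⟨h, -⟩ | ⟨-, h⟩)⟩
    exacts [Or.inl h, Or.inr h, Or.inl h.symm, absurd h hx]
  · rintro (h | ⟨rfl, h⟩)
    · exact ⟨h.ne, Or.inl (Or.inl ⟨h, hx, hy h⟩)⟩
    · exact ⟨fun e => hx (e ▸ h), Or.inl (Or.inr ⟨rfl, h⟩)⟩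

theorem adj_of_triangleStar_adj ⦃x y : V⦄ (hx : ¬H.InTriangle x) (hy : ¬H.InTriangle y)
    (hxy : (H.triangleStar v₀).Adj x y) : H.Adj x y :=
  ((hT.triangleStar_adj_of_not_inTriangle hx).mp hxy).resolve_right fun h => hy h.2

variable (hv₀ : ¬H.InTriangle v₀)
include hv₀

theorem card_edgeSet_triangleStar [Fintype V] :
    Nat.card (H.triangleStar v₀).edgeSet = Nat.card H.edgeSet := by
  classical
  set T : Finset V := univ.filter H.InTriangle
  -- A triangle vertex trades its two triangle edges for one edge to `v₀`, which gains `#T` edges.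
  have hdeg : ∀ v, (H.triangleStar v₀).degree v + (if H.InTriangle v then 1 else 0)
      = H.degree v + if v = v₀ then #T else 0 := by
    intro v
    by_cases hv : H.InTriangle v
    · have hne : v ≠ v₀ := by rintro rfl; exact hv₀ hv
      have hnbr : (H.triangleStar v₀).neighborFinset v = {v₀} := by
        ext u
        rw [mem_neighborFinset, triangleStar_adj_of_inTriangle hv₀ hv, mem_singleton]
      rw [degree, hnbr, hT.degree_eq_two hv]
      simp [hv, hne]
    · have hnbr : (H.triangleStar v₀).neighborFinset v
          = H.neighborFinset v ∪ univ.filter fun u => v = v₀ ∧ H.InTriangle u := by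
        ext u
        simp [hT.triangleStar_adj_of_not_inTriangle hv]
      have hdisj : Disjoint (H.neighborFinset v) (univ.filter fun u => v = v₀ ∧ H.InTriangle u) :=
        Finset.disjoint_left.mpr fun u hu hu' =>
          hv (hT.inTriangle_of_adj (mem_filter.mp hu').2.2 ((mem_neighborFinset _ _ _).mp hu).symm)
      rw [degree, hnbr, card_union_of_disjoint hdisj, ← degree]
      by_cases hvv₀ : v = v₀ <;> simp [hv, hvv₀, hv₀, T]
  have hsum := sum_congr rfl fun v (_ : v ∈ univ) => hdeg v
  rw [sum_add_distrib, sum_add_distrib, sum_boole, sum_ite_eq' univ v₀] at hsum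
  simp only [mem_univ, if_true, Nat.cast_id] at hsum
  change _ + #T = _ at hsum
  have h₁ := two_mul_card_edgeSet (H.triangleStar v₀)
  have h₂ := two_mul_card_edgeSet H
  omega

theorem noTriangle_triangleStar : (H.triangleStar v₀).NoTriangle := by
  intro x y z hxy hyz hxz
  by_cases hx : H.InTriangle x
  · exact hyz.ne (triangleStar_adj_eq_of_inTriangle hv₀ hx hxy hxz)
  by_cases hy : H.InTriangle y
  · exact hxz.ne (triangleStar_adj_eq_of_inTriangle hv₀ hy hxy.symm hyz)
  by_cases hz : H.InTriangle z
  · exact hxy.ne (triangleStar_adj_eq_of_inTriangle hv₀ hz hxz.symm hyz.symm)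
  have adj := hT.adj_of_triangleStar_adj (v₀ := v₀)
  exact hx ⟨y, z, adj hx hy hxy, adj hx hz hxz, adj hy hz hyz⟩

theorem noFourCycle_triangleStar (hC4 : H.NoFourCycle) : (H.triangleStar v₀).NoFourCycle := by
  intro a b c d hac hbd hab hbc hcd hda
  by_cases ha : H.InTriangle a
  · exact hbd (triangleStar_adj_eq_of_inTriangle hv₀ ha hab hda.symm)
  by_cases hb : H.InTriangle b
  · exact hac (triangleStar_adj_eq_of_inTriangle hv₀ hb hab.symm hbc)
  by_cases hc : H.InTriangle c
  · exact hbd (triangleStar_adj_eq_of_inTriangle hv₀ hc hbc.symm hcd)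
  by_cases hd : H.InTriangle d
  · exact hac (triangleStar_adj_eq_of_inTriangle hv₀ hd hda hcd.symm)
  have adj := hT.adj_of_triangleStar_adj (v₀ := v₀)
  exact hC4 a b c d hac hbd (adj ha hb hab) (adj hb hc hbc) (adj hc hd hcd) (adj hd ha hda)

end TrianglesAreComponents

theorem cycleGraph_adj_val {n : ℕ} {u v : Fin n} (h : (cycleGraph n).Adj u v) :
    u.val = v.val + 1 ∨ v.val = u.val + 1 ∨ u.val + n = v.val + 1 ∨ v.val + n = u.val + 1 := by
  rw [cycleGraph_adj'] at h
  have h₁ := Fin.coe_sub_iff_le (a := u) (b := v)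
  have h₂ := Fin.coe_sub_iff_lt (a := u) (b := v)
  have h₃ := Fin.coe_sub_iff_le (a := v) (b := u)
  have h₄ := Fin.coe_sub_iff_lt (a := v) (b := u)
  omega

theorem cycleGraph_noTriangle {n : ℕ} (hn : 4 ≤ n) : (cycleGraph n).NoTriangle := by
  intro x y z hxy hyz hxz
  have := cycleGraph_adj_val hxy
  have := cycleGraph_adj_val hyz
  have := cycleGraph_adj_val hxz
  omega

theorem cycleGraph_noFourCycle {n : ℕ} (hn : 5 ≤ n) : (cycleGraph n).NoFourCycle := by
  intro a b c d hac hbd hab hbc hcd hda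
  have := cycleGraph_adj_val hab
  have := cycleGraph_adj_val hbc
  have := cycleGraph_adj_val hcd
  have := cycleGraph_adj_val hda
  have := Fin.val_ne_of_ne hac
  have := Fin.val_ne_of_ne hbd
  omega

theorem card_edgeSet_cycleGraph {n : ℕ} (hn : 3 ≤ n) : Nat.card (cycleGraph n).edgeSet = n := by
  obtain ⟨m, rfl⟩ := Nat.exists_eq_add_of_le' hn
  have h := two_mul_card_edgeSet (cycleGraph (m + 3))
  simp only [cycleGraph_degree_three_le, sum_const, card_univ, Fintype.card_fin,
    smul_eq_mul] at h
  omega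

end SimpleGraph

theorem C3C4Free.card_edgeSet_le_exC34 {n : ℕ} {G : SimpleGraph (Fin n)} (hG : C3C4Free G) :
    Nat.card G.edgeSet ≤ exC34 n := by
  refine le_csSup ⟨Nat.card (Sym2 (Fin n)), ?_⟩ ⟨G, hG, rfl⟩
  rintro m ⟨G', -, rfl⟩
  exact Nat.card_le_card_of_injective _ Subtype.val_injective

theorem SimpleGraph.TrianglesAreComponents.card_edgeSet_le_exC34 {n : ℕ}
    {H : SimpleGraph (Fin n)} (hT : H.TrianglesAreComponents) (hC4 : H.NoFourCycle)
    (hn : 4 ≤ n) : Nat.card H.edgeSet ≤ exC34 n := by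
  by_cases hall : ∀ v, H.InTriangle v
  · have h5 : 5 ≤ n := by simpa using hT.five_le_card hall (by rw [Fintype.card_fin]; omega)
    have hC : C3C4Free (SimpleGraph.cycleGraph n) :=
      ⟨SimpleGraph.cycleGraph_noTriangle hn, SimpleGraph.cycleGraph_noFourCycle h5⟩
    calc Nat.card H.edgeSet = Nat.card (SimpleGraph.cycleGraph n).edgeSet := by
          rw [hT.card_edgeSet_of_forall_inTriangle hall, Fintype.card_fin,
            SimpleGraph.card_edgeSet_cycleGraph (by omega)]
      _ ≤ exC34 n := hC.card_edgeSet_le_exC34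
  · obtain ⟨v₀, hv₀⟩ := not_forall.mp hall
    have hG : C3C4Free (H.triangleStar v₀) :=
      ⟨hT.noTriangle_triangleStar hv₀, hT.noFourCycle_triangleStar hv₀ hC4⟩
    exact (hT.card_edgeSet_triangleStar hv₀).symm.le.trans hG.card_edgeSet_le_exC34

section MultiplicityGraph

variable {n : ℕ} {w : Fin n → Fin n → ℕ}

variable (w) in
def multGraph (k : ℕ) : SimpleGraph (Fin n) :=
  SimpleGraph.fromRel fun i j => w i j = k

theorem multGraph_adj (hsym : ∀ i j, w i j = w j i) {k : ℕ} {i j : Fin n} :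
    (multGraph w k).Adj i j ↔ i ≠ j ∧ w i j = k := by
  rw [multGraph, SimpleGraph.fromRel_adj, hsym j i, or_self]

theorem card_filter_pairs_univ_adj (G : SimpleGraph (Fin n)) [DecidableRel G.Adj] :
    #((pairs n univ).filter fun p => G.Adj p.1 p.2) = Nat.card G.edgeSet := by
  rw [Nat.card_eq_fintype_card, ← SimpleGraph.edgeFinset_card]
  refine card_nbij' (fun p => s(p.1, p.2)) (fun e => (e.inf, e.sup)) ?_ ?_ ?_ ?_
  · intro p hp
    simp only [coe_filter, Set.mem_ofPred_eq, SimpleGraph.coe_edgeFinset,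
      SimpleGraph.mem_edgeSet] at hp ⊢
    exact hp.2
  · intro e he
    induction e using Sym2.ind with
    | _ x y =>
      simp only [SimpleGraph.coe_edgeFinset, SimpleGraph.mem_edgeSet] at he
      rcases lt_or_gt_of_ne he.ne with h | h
      · simp [pairs, h, h.le, he]
      · simp [pairs, h, h.le, he.symm]
  · intro p hp
    simp only [pairs, univ_product_univ, coe_filter, mem_filter, mem_univ, true_and,
      Set.mem_ofPred_eq] at hp
    simp [hp.1.le]
  · intro e _
    induction e using Sym2.ind with
    | _ x y =>
      rcases le_total x y with h | h
      · simp [h]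
      · simp [h, Sym2.eq_swap]

theorem mgP_univ_eq_two_pow (hsym : ∀ i j, w i j = w j i) (hpos : ∀ i j, i ≠ j → 1 ≤ w i j)
    (hle2 : ∀ i j, w i j ≤ 2) : mgP n w univ = 2 ^ Nat.card (multGraph w 2).edgeSet := by
  classical
  have hfactor : ∀ p ∈ pairs n univ,
      w p.1 p.2 = 2 ^ if (multGraph w 2).Adj p.1 p.2 then 1 else 0 := by
    intro p hp
    have hne : p.1 ≠ p.2 := (mem_filter.mp hp).2.ne
    have := hpos _ _ hne
    have := hle2 p.1 p.2
    rw [multGraph_adj hsym]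
    split_ifs with h <;> omega
  rw [mgP, prod_congr rfl hfactor, prod_pow_eq_pow_sum, sum_boole, Nat.cast_id]
  congr 1
  convert card_filter_pairs_univ_adj (multGraph w 2)

variable (h49 : IsNSQ n 4 9 w) (hsym : ∀ i j, w i j = w j i)
  (hpos : ∀ i j, i ≠ j → 1 ≤ w i j)
include h49 hsym hpos

theorem IsNSQ.trianglesAreComponents : (multGraph w 2).TrianglesAreComponents := by
  intro x y z u hxy hxz hyz hxu
  simp only [multGraph_adj hsym] at hxy hxz hyz hxu
  by_contra! hu
  have := h49.sum_le_of_four hsym hxy.1 hxz.1 hxu.1 hyz.1 hu.1.symm hu.2.symm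
  have := hpos y u hu.1.symm
  have := hpos z u hu.2.symm
  omega

theorem IsNSQ.noFourCycle : (multGraph w 2).NoFourCycle := by
  intro a b c d hac hbd hab hbc hcd hda
  simp only [multGraph_adj hsym] at hab hbc hcd hda
  have := h49.sum_le_of_four hsym hab.1 hac hda.1.symm hbc.1 hbd hcd.1
  have := hpos a c hac
  have := hpos b d hbd
  rw [hsym d a] at hda
  omega

end MultiplicityGraph

theorem product_bound_mult_le_two (n : ℕ) (hn : 4 ≤ n) (w : Fin n → Fin n → ℕ)
    (hsym : ∀ i j, w i j = w j i)
    (h49 : IsNSQ n 4 9 w)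
    (hle2 : ∀ i j : Fin n, w i j ≤ 2) :
    mgP n w Finset.univ ≤ 2 ^ exC34 n := by
  by_cases hpos : ∀ i j, i ≠ j → 1 ≤ w i j
  · rw [mgP_univ_eq_two_pow hsym hpos hle2]
    exact Nat.pow_le_pow_right two_pos <|
      (h49.trianglesAreComponents hsym hpos).card_edgeSet_le_exC34
        (h49.noFourCycle hsym hpos) hn
  · push Not at hpos
    obtain ⟨i, j, hij, hw⟩ := hpos
    rw [mgP_univ_eq_zero hsym hij (by omega)]
    exact Nat.zero_le _
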